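/- arXiv:0804.0526 — 2 statements merged into one kernel-verified Lean document; each statement's English description precedes it below -/
import Mathlib

section
/- Let X ⊆ Y be the set of positive words in a, b (including the identity element) and let Q be the orthogonal projection of ℓ²(Y) onto the closed span of {δ_x : x ∈ X}. Then: (1) for each operator T ∈ {S_a, S_b, S_a*, S_b*}, the operator QT − TQ has rank at most one; and (2) for any finite sequence T₁, …, T_k of operators each belonging to {S_a, S_b, S_a*, S_b*}, the operator Q T_k T_{k−1} ⋯ T₁ Q − (Q T_k Q)(Q T_{k−1} Q) ⋯ (Q T₁ Q) is compact. -/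
noncomputable section

/-- The free group on two generators `a`, `b`. -/
abbrev F2 : Type := FreeGroup (Fin 2)

/-- The subset `Y ⊆ F₂` of elements of the form `aⁿ·w` with `n ∈ ℤ` and `w` a
positive word in `a`, `b`. -/
abbrev Yset : Set F2 :=
  {x : F2 | ∃ (n : ℤ) (w : FreeMonoid (Fin 2)),
    x = FreeGroup.of 0 ^ n * FreeMonoid.lift FreeGroup.of w}

/-- The subset `X ⊆ Y` of positive words in `a`, `b` (including the identity). -/
abbrev Xpos : Set F2 :=
  {x : F2 | ∃ w : FreeMonoid (Fin 2), x = FreeMonoid.lift FreeGroup.of w}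

abbrev l2Y : Type := lp (fun _ : Yset => ℂ) 2

instance : DecidableEq ↥Yset := Classical.decEq _

/-- The standard basis vector δ_y of ℓ²(Y). -/
def δ (y : Yset) : l2Y := lp.single 2 y 1

/-!
For `y ∈ Y` and a generator `g`, the element `y g` lies in `X` while `y` does not only when
`g = a` and `y = a⁻¹`. Indeed, writing `y = (y g) g⁻¹`, the reduced word of `y` is a positive word
followed by at most the letter `g⁻¹`, whereas in the reduced word of an element of `Y` every
inverse letter is an `a⁻¹` standing before all positive letters. Hence `Q` commutes with `S_b`,
and `Q S_a - S_a Q` is the rank-one operator `δ_{a⁻¹} ↦ δ_1`; since `Q` is self-adjoint, the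
commutators with `S_a*` and `S_b*` are, up to sign, their adjoints.

Compact operators form a two-sided ideal, and whenever `q² = q` and `q M = M`,
`q t P q - (q t q) M = t (q P q - M) + (q t - t q) (P q - M)`.
By induction on the length of the word, this reduces the compactness of
`Q T_k ⋯ T₁ Q - (Q T_k Q) ⋯ (Q T₁ Q)` to that of the commutators `Q T - T Q`.
-/

lemma List.eq_nil_and_mem_of_append_singleton_eq_append {α : Type*} {P : α → Prop}
    {r s₁ s₂ : List α} {x : α} (h : r ++ [x] = s₁ ++ s₂) (hr : ∀ p ∈ r, P p) (hx : ¬ P x)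
    (hs₁ : ∀ p ∈ s₁, ¬ P p) (hs₂ : ∀ p ∈ s₂, P p) : r = [] ∧ x ∈ s₁ := by
  rcases List.eq_nil_or_concat' s₂ with rfl | ⟨L, b, rfl⟩
  · rw [List.append_nil] at h
    subst h
    exact ⟨List.eq_nil_iff_forall_not_mem.2 fun p hp => hs₁ p (by simp [hp]) (hr p hp), by simp⟩
  · rw [← List.append_assoc] at h
    obtain rfl : x = b := by simpa using (List.append_inj' h rfl).2
    exact absurd (hs₂ x (by simp)) hx

section FreeGroup

open FreeGroup List

lemma mul_mem_Xpos {x y : F2} (hx : x ∈ Xpos) (hy : y ∈ Xpos) : x * y ∈ Xpos := by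
  obtain ⟨v, rfl⟩ := hx
  obtain ⟨w, rfl⟩ := hy
  exact ⟨v * w, by simp⟩

lemma of_mem_Xpos (i : Fin 2) : of i ∈ Xpos := ⟨FreeMonoid.of i, by simp⟩

lemma one_mem_Xpos : (1 : F2) ∈ Xpos := ⟨1, by simp⟩

lemma forall_toWord_of_mem_Xpos {x : F2} (hx : x ∈ Xpos) : ∀ p ∈ x.toWord, p.2 = true := by
  obtain ⟨w, rfl⟩ := hx
  induction w using FreeMonoid.inductionOn' with
  | one => simp
  | of_mul i w ih =>
    intro p hp
    rw [_root_.map_mul, FreeMonoid.lift_eval_of] at hp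
    rcases List.mem_append.1 ((toWord_mul_sublist _ _).subset hp) with hp | hp
    · simp_all [toWord_of]
    · exact ih p hp

lemma mk_mem_Xpos {L : List (Fin 2 × Bool)} (hL : ∀ p ∈ L, p.2 = true) : mk L ∈ Xpos := by
  induction L with
  | nil => exact one_mem_Xpos
  | cons p L ih =>
    obtain ⟨i, hi⟩ := p
    obtain rfl : hi = true := hL _ List.mem_cons_self
    rw [← List.singleton_append, ← mul_mk]
    exact mul_mem_Xpos (of_mem_Xpos i) (ih fun q hq => hL q (List.mem_cons_of_mem _ hq))

lemma mem_Xpos_iff_forall_toWord {x : F2} : x ∈ Xpos ↔ ∀ p ∈ x.toWord, p.2 = true :=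
  ⟨forall_toWord_of_mem_Xpos, fun h => mk_toWord (x := x) ▸ mk_mem_Xpos h⟩

lemma mul_of_mem_Yset {y : F2} (hy : y ∈ Yset) (i : Fin 2) : y * of i ∈ Yset := by
  obtain ⟨n, w, rfl⟩ := hy
  exact ⟨n, w * FreeMonoid.of i, by simp [mul_assoc]⟩

lemma one_mem_Yset : (1 : F2) ∈ Yset := ⟨0, 1, by simp⟩

lemma inv_of_zero_mem_Yset : (of 0 : F2)⁻¹ ∈ Yset := ⟨-1, 1, by simp⟩

lemma inv_of_notMem_Xpos (i : Fin 2) : (of i : F2)⁻¹ ∉ Xpos := by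
  rw [mem_Xpos_iff_forall_toWord]
  simp [toWord_inv, toWord_of, invRev]

lemma mem_Xpos_or_eq_inv_pow_mul {y : F2} (hy : y ∈ Yset) :
    y ∈ Xpos ∨ ∃ (k : ℕ) (u : F2), u ∈ Xpos ∧ y = (of 0 ^ k)⁻¹ * u := by
  obtain ⟨n, w, rfl⟩ := hy
  obtain ⟨k, rfl | rfl⟩ := Int.eq_nat_or_neg n
  · left
    exact ⟨FreeMonoid.of 0 ^ k * w, by simp⟩
  · exact .inr ⟨k, _, ⟨w, rfl⟩, by simp⟩

lemma eq_inv_of_zero_of_mul_of_mem_Xpos {y : F2} (hy : y ∈ Yset) (hyX : y ∉ Xpos) {g : Fin 2}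
    (hyg : y * of g ∈ Xpos) : g = 0 ∧ y = (of 0)⁻¹ := by
  obtain ⟨k, u, hu, hyu⟩ := (mem_Xpos_or_eq_inv_pow_mul hy).resolve_left hyX
  have h₁ : y.toWord <+ (y * of g).toWord ++ [(g, false)] := by
    simpa [toWord_inv, toWord_of, invRev] using toWord_mul_sublist (y * of g) (of g)⁻¹
  have h₂ : y.toWord <+ List.replicate k (0, false) ++ u.toWord := by
    simpa [hyu, toWord_inv, toWord_of_pow, invRev] using toWord_mul_sublist (of 0 ^ k)⁻¹ u
  obtain ⟨r₁, r₂, hy₁, hr₁, hr₂⟩ := List.sublist_append_iff.1 h₁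
  rcases List.sublist_singleton.1 hr₂ with rfl | rfl
  · refine absurd (mem_Xpos_iff_forall_toWord.2 fun p hp => ?_) hyX
    rw [hy₁, List.append_nil] at hp
    exact forall_toWord_of_mem_Xpos hyg p (hr₁.subset hp)
  obtain ⟨s₁, s₂, hy₂, hs₁, hs₂⟩ := List.sublist_append_iff.1 h₂
  obtain ⟨rfl, hg⟩ := List.eq_nil_and_mem_of_append_singleton_eq_append (P := fun p => p.2 = true)
    (hy₁.symm.trans hy₂) (fun p hp => forall_toWord_of_mem_Xpos hyg p (hr₁.subset hp)) (by simp)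
    (fun p hp => by simp [List.eq_of_mem_replicate (hs₁.subset hp)])
    (fun p hp => forall_toWord_of_mem_Xpos hu p (hs₂.subset hp))
  obtain rfl : g = 0 := by simpa using List.eq_of_mem_replicate (hs₁.subset hg)
  refine ⟨rfl, toWord_injective ?_⟩
  simp [hy₁, toWord_inv, toWord_of, invRev]

lemma mul_of_mem_Xpos_and_notMem_iff {y : F2} (hy : y ∈ Yset) {g : Fin 2} :
    y * of g ∈ Xpos ∧ y ∉ Xpos ↔ g = 0 ∧ y = (of 0)⁻¹ := by
  refine ⟨fun h => eq_inv_of_zero_of_mul_of_mem_Xpos hy h.2 h.1, ?_⟩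
  rintro ⟨rfl, rfl⟩
  exact ⟨by simpa using one_mem_Xpos, inv_of_notMem_Xpos 0⟩

end FreeGroup

section Compression

lemma IsIdempotentElem.mul_prod_map_mul_mul {R : Type*} [Monoid R] {q : R}
    (hq : IsIdempotentElem q) {L : List R} (hL : L ≠ []) :
    q * (L.map (q * · * q)).prod = (L.map (q * · * q)).prod := by
  obtain ⟨t, L, rfl⟩ := List.exists_cons_of_ne_nil hL
  simp only [List.map_cons, List.prod_cons, ← mul_assoc, hq.eq]

theorem TwoSidedIdeal.mul_prod_mul_sub_prod_map_mem {R : Type*} [Ring R] (I : TwoSidedIdeal R)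
    {q : R} (hq : IsIdempotentElem q) {L : List R} (hL : L ≠ [])
    (hI : ∀ t ∈ L, q * t - t * q ∈ I) : q * L.prod * q - (L.map (q * · * q)).prod ∈ I := by
  induction L with
  | nil => exact absurd rfl hL
  | cons t L ih =>
    rcases eq_or_ne L [] with rfl | hL'
    · simp
    set P := L.prod
    set M := (L.map (q * · * q)).prod
    have hM : q * M = M := hq.mul_prod_map_mul_mul hL'
    have hdecomp : q * (t * P) * q - q * t * q * M =
        t * (q * P * q - M) + (q * t - t * q) * (P * q - M) := by
      refine sub_eq_zero.1 ?_
      rw [show q * (t * P) * q - q * t * q * M -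
          (t * (q * P * q - M) + (q * t - t * q) * (P * q - M)) = (t + q * t) * (M - q * M) by
        noncomm_ring, hM, sub_self, mul_zero]
    simp only [List.prod_cons, List.map_cons]
    rw [hdecomp]
    exact I.add_mem (I.mul_mem_left _ _ (ih hL' fun s hs => hI s (List.mem_cons_of_mem _ hs)))
      (I.mul_mem_right _ _ (hI t List.mem_cons_self))

lemma IsSelfAdjoint.mul_star_sub_star_mul {R : Type*} [Ring R] [StarRing R] {q : R}
    (hq : IsSelfAdjoint q) (t : R) : q * star t - star t * q = -star (q * t - t * q) := by
  rw [star_sub, star_mul, star_mul, hq.star_eq, neg_sub]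

end Compression

section CompactOperatorIdeal

variable (𝕜 E : Type*) [NontriviallyNormedField 𝕜] [NormedAddCommGroup E] [NormedSpace 𝕜 E]

def compactOperatorIdeal : TwoSidedIdeal (E →L[𝕜] E) :=
  .mk' {T | IsCompactOperator T} isCompactOperator_zero .add .neg
    (fun hT => hT.clm_comp _) (fun hT => hT.comp_clm _)

variable {𝕜 E} in
@[simp]
lemma mem_compactOperatorIdeal {T : E →L[𝕜] E} :
    T ∈ compactOperatorIdeal 𝕜 E ↔ IsCompactOperator T :=
  TwoSidedIdeal.mem_mk' _ _ _ _ _ _ _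

end CompactOperatorIdeal

section RankOne

open InnerProductSpace ContinuousLinearMap

variable {𝕜 E F : Type*} [RCLike 𝕜] [NormedAddCommGroup E] [NormedSpace 𝕜 E]
  [NormedAddCommGroup F] [InnerProductSpace 𝕜 F]

lemma rank_range_rankOne_le (x : E) (y : F) :
    Module.rank 𝕜 (LinearMap.range (rankOne 𝕜 x y : F →ₗ[𝕜] E)) ≤ 1 :=
  (rank_submodule_le_one_iff' _).2 ⟨x, LinearMap.range_le_iff_comap.2 <| eq_top_iff.2
    fun _ _ => Submodule.smul_mem _ _ (Submodule.mem_span_singleton_self x)⟩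

lemma isCompactOperator_rankOne (x : E) (y : F) : IsCompactOperator (rankOne 𝕜 x y) :=
  (isCompactOperator_of_locallyCompactSpace_rng (toSpanSingleton 𝕜 x)).comp_clm (innerSL 𝕜 y)

end RankOne

section Diagonal

open scoped lp
open ContinuousLinearMap

variable {ι 𝕜 : Type*} [RCLike 𝕜] [DecidableEq ι]

lemma lp.ext_single_one {E : Type*} [AddCommMonoid E] [Module 𝕜 E] [TopologicalSpace E]
    [T2Space E] {A B : ℓ²(ι, 𝕜) →L[𝕜] E} (h : ∀ i, A (lp.single 2 i 1) = B (lp.single 2 i 1)) :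
    A = B :=
  lp.ext_continuousLinearMap ENNReal.ofNat_ne_top fun i => ext_ring (h i)

variable {Q : ℓ²(ι, 𝕜) →L[𝕜] ℓ²(ι, 𝕜)} {s : Set ι}
  (hQ : ∀ i, (i ∈ s → Q (lp.single 2 i 1) = lp.single 2 i 1) ∧ (i ∉ s → Q (lp.single 2 i 1) = 0))
include hQ

lemma isIdempotentElem_of_single_one : IsIdempotentElem Q := by
  refine lp.ext_single_one fun i => ?_
  by_cases hi : i ∈ s
  · simp [(hQ i).1 hi]
  · simp [(hQ i).2 hi]

lemma isSelfAdjoint_of_single_one : IsSelfAdjoint Q := by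
  rw [isSelfAdjoint_iff']
  refine lp.ext_single_one fun i => lp.ext <| funext fun j => ?_
  calc (adjoint Q (lp.single 2 i 1)) j
      = inner 𝕜 (lp.single 2 j (1 : 𝕜)) (adjoint Q (lp.single 2 i 1)) := by
        simp [lp.inner_single_left]
    _ = inner 𝕜 (Q (lp.single 2 j 1)) (lp.single 2 i (1 : 𝕜)) := adjoint_inner_right _ _ _
    _ = (Q (lp.single 2 i 1)) j := by
        rcases eq_or_ne j i with rfl | hji
        · by_cases hj : j ∈ s <;> simp [(hQ j).1, (hQ j).2, hj]
        · by_cases hi : i ∈ s <;> by_cases hj : j ∈ s <;>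
            simp [(hQ i).1, (hQ i).2, (hQ j).1, (hQ j).2, hi, hj, lp.inner_single_right,
              lp.single_apply, hji, hji.symm]

end Diagonal

section Shifts

open FreeGroup ContinuousLinearMap InnerProductSpace

variable {Q S : l2Y →L[ℂ] l2Y}
  (hQ : ∀ y : Yset, ((y : F2) ∈ Xpos → Q (δ y) = δ y) ∧ ((y : F2) ∉ Xpos → Q (δ y) = 0))
include hQ

lemma commutator_apply_delta_of_shift {g : Fin 2}
    (hS : ∀ (y : Yset) (h : (y : F2) * of g ∈ Yset), S (δ y) = δ ⟨(y : F2) * of g, h⟩)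
    (y : Yset) :
    (Q * S - S * Q) (δ y) =
      if g = 0 ∧ (y : F2) = (of 0)⁻¹ then δ ⟨(y : F2) * of g, mul_of_mem_Yset y.2 g⟩ else 0 := by
  have hSy := hS y (mul_of_mem_Yset y.2 g)
  have hiff := mul_of_mem_Xpos_and_notMem_iff y.2 (g := g)
  change Q (S (δ y)) - S (Q (δ y)) = _
  by_cases hy : (y : F2) ∈ Xpos
  · rw [if_neg fun h => (hiff.2 h).2 hy, (hQ y).1 hy, hSy,
      (hQ _).1 (mul_mem_Xpos hy (of_mem_Xpos g)), sub_self]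
  rw [(hQ y).2 hy, map_zero, sub_zero, hSy]
  by_cases hyg : (y : F2) * of g ∈ Xpos
  · rw [(hQ _).1 hyg, if_pos (hiff.1 ⟨hyg, hy⟩)]
  · rw [(hQ _).2 hyg, if_neg fun h => hyg (hiff.2 h).1]

lemma commutator_eq_zero_of_shift_one
    (hS : ∀ (y : Yset) (h : (y : F2) * of 1 ∈ Yset), S (δ y) = δ ⟨(y : F2) * of 1, h⟩) :
    Q * S - S * Q = 0 :=
  lp.ext_single_one fun y => by
    change (Q * S - S * Q) (δ y) = 0
    simp [commutator_apply_delta_of_shift hQ hS y]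

lemma commutator_eq_rankOne_of_shift_zero
    (hS : ∀ (y : Yset) (h : (y : F2) * of 0 ∈ Yset), S (δ y) = δ ⟨(y : F2) * of 0, h⟩) :
    Q * S - S * Q = rankOne ℂ (δ ⟨1, one_mem_Yset⟩) (δ ⟨(of 0)⁻¹, inv_of_zero_mem_Yset⟩) := by
  refine lp.ext_single_one fun y => ?_
  change (Q * S - S * Q) (δ y) = rankOne ℂ _ _ (δ y)
  rw [commutator_apply_delta_of_shift hQ hS y, rankOne_apply]
  by_cases hy : (y : F2) = (of 0)⁻¹
  · obtain rfl : y = ⟨_, inv_of_zero_mem_Yset⟩ := Subtype.ext hy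
    simp [δ]
  · simp [hy, δ, lp.inner_single_left, Subtype.ext_iff, eq_comm]

end Shifts

open ContinuousLinearMap in
/-- Let `Q` be the orthogonal projection of `ℓ²(Y)` onto the closed span of
`{δ_x : x ∈ X}`.  Then (1) for `T ∈ {S_a, S_b, S_a*, S_b*}` the commutator `QT − TQ`
has rank at most one, and (2) for any nonempty finite sequence `T₁, …, T_k` of such
operators, `Q T_k ⋯ T₁ Q − (Q T_k Q) ⋯ (Q T₁ Q)` is compact. -/
theorem stmt15 (Sa Sb : l2Y →L[ℂ] l2Y)
    (hSa : ∀ (y : Yset) (h : (y : F2) * FreeGroup.of 0 ∈ Yset),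
      Sa (δ y) = δ ⟨(y : F2) * FreeGroup.of 0, h⟩)
    (hSb : ∀ (y : Yset) (h : (y : F2) * FreeGroup.of 1 ∈ Yset),
      Sb (δ y) = δ ⟨(y : F2) * FreeGroup.of 1, h⟩)
    (Q : l2Y →L[ℂ] l2Y)
    (hQ : ∀ y : Yset,
      ((y : F2) ∈ Xpos → Q (δ y) = δ y) ∧ ((y : F2) ∉ Xpos → Q (δ y) = 0)) :
    (∀ T ∈ ({Sa, Sb, adjoint Sa, adjoint Sb} : Set (l2Y →L[ℂ] l2Y)),
      Module.rank ℂ (LinearMap.range ((Q * T - T * Q : l2Y →L[ℂ] l2Y)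
        : l2Y →ₗ[ℂ] l2Y)) ≤ 1) ∧
    (∀ L : List (l2Y →L[ℂ] l2Y), L ≠ [] →
      (∀ T ∈ L, T ∈ ({Sa, Sb, adjoint Sa, adjoint Sb} : Set (l2Y →L[ℂ] l2Y))) →
      IsCompactOperator
        ((Q * L.prod * Q - (L.map (fun T => Q * T * Q)).prod : l2Y →L[ℂ] l2Y)
          : l2Y → l2Y)) := by
  have hQsa : IsSelfAdjoint Q := isSelfAdjoint_of_single_one hQ
  have hcomm : ∀ T ∈ ({Sa, Sb, adjoint Sa, adjoint Sb} : Set (l2Y →L[ℂ] l2Y)),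
      ∃ u v : l2Y, Q * T - T * Q = InnerProductSpace.rankOne ℂ u v := by
    simp only [Set.mem_insert_iff, Set.mem_singleton_iff]
    rintro T (rfl | rfl | rfl | rfl)
    · exact ⟨_, _, commutator_eq_rankOne_of_shift_zero hQ hSa⟩
    · exact ⟨0, 0, by simp [commutator_eq_zero_of_shift_one hQ hSb]⟩
    · rw [← star_eq_adjoint, hQsa.mul_star_sub_star_mul,
        commutator_eq_rankOne_of_shift_zero hQ hSa, star_eq_adjoint,
        InnerProductSpace.adjoint_rankOne]
      exact ⟨_, _, (map_neg₂ _ _ _).symm⟩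
    · refine ⟨0, 0, ?_⟩
      simp [← star_eq_adjoint, hQsa.mul_star_sub_star_mul, commutator_eq_zero_of_shift_one hQ hSb]
  refine ⟨fun T hT => ?_, fun L hL hLS => ?_⟩
  · obtain ⟨u, v, h⟩ := hcomm T hT
    rw [h]
    exact rank_range_rankOne_le u v
  · refine mem_compactOperatorIdeal.1 <|
      (compactOperatorIdeal ℂ l2Y).mul_prod_mul_sub_prod_map_mem
        (isIdempotentElem_of_single_one hQ) hL fun T hT => ?_
    obtain ⟨u, v, h⟩ := hcomm T (hLS T hT)
    rw [mem_compactOperatorIdeal, h]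
    exact isCompactOperator_rankOne u v
end
end

section
/- The operators t_a and t_b on ℓ²(Y) defined by t_a = S_a³(S_a*)² + S_bS_a(S_a*)²S_b* + S_aS_bS_a*S_b*S_a*S_b* + S_b²(S_b*)²S_a*S_b* + S_a²S_bS_a(S_b*)² + S_a²S_b²S_b*S_a* and t_b = S_b²S_a(S_b*)² + S_aS_bS_a*S_b*S_a* + S_a²S_a*(S_b*)²S_a* + S_bS_a(S_b*)³S_a* + S_b³S_aS_a*S_b* + S_b⁴(S_a*)² are both unitary operators. -/
/-!
The operators `S_a`, `S_b` satisfy the Cuntz relations: they are isometries with orthogonal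
ranges whose sum is everything, because right multiplication by `a` and by `b` are injective on
`Y` and `Y` is the disjoint union of `Ya` and `Yb`. (Every element of `Y` ends in `a` or in `b`;
after left multiplication by a high power of `a` the two cases become distinct positive words.)

In any `*`-ring, if `(u_k)` and `(v_k)` are finite families with `u_k* u_l = δ_kl` and
`∑ u_k u_k* = 1`, then `∑ u_k v_k*` is unitary. Writing `s_μ` for the product of the `S`'s
along a word `μ ∈ {a, b}*`, each of `t_a`, `t_b` has the form `∑ s_{μ_k} s_{ν_k}*` where
`(μ_k)` and `(ν_k)` are complete prefix codes; for such a code the `s_μ` form a family of the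
above kind, orthogonality coming from prefix-freeness and `∑ s_μ s_μ* = 1` from splitting
`s_μ s_μ* = s_{μa} s_{μa}* + s_{μb} s_{μb}*` down to the empty word.
-/

noncomputable section

structure IsCuntzFamily {ι R : Type*} [Fintype ι] [DecidableEq ι] [Semiring R] [StarRing R]
    (u : ι → R) : Prop where
  star_mul_eq : ∀ i j, star (u i) * u j = if i = j then 1 else 0
  sum_mul_star : ∑ i, u i * star (u i) = 1

def cuntzWord {ι R : Type*} [Monoid R] (u : ι → R) (μ : List ι) : R := (μ.map u).prod

namespace IsCuntzFamily

variable {ι κ R : Type*} [Fintype ι] [DecidableEq ι] [Fintype κ] [DecidableEq κ]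
  [Semiring R] [StarRing R] {u : ι → R}

theorem sum_mul_star_mem_unitary {u v : κ → R} (hu : IsCuntzFamily u) (hv : IsCuntzFamily v) :
    ∑ k, u k * star (v k) ∈ unitary R := by
  have hmul : ∀ {u v : κ → R}, IsCuntzFamily u → IsCuntzFamily v →
      (∑ k, v k * star (u k)) * ∑ k, u k * star (v k) = 1 := by
    intro u v hu hv
    simp_rw [Finset.sum_mul_sum, mul_assoc, ← mul_assoc (star (u _)), hu.star_mul_eq,
      ite_mul, one_mul, zero_mul, mul_ite, mul_zero, Finset.sum_ite_eq, Finset.mem_univ, if_true]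
    exact hv.sum_mul_star
  have hstar : star (∑ k, u k * star (v k)) = ∑ k, v k * star (u k) := by
    simp [star_sum, star_mul]
  rw [Unitary.mem_iff, hstar]
  exact ⟨hmul hu hv, hmul hv hu⟩

theorem star_cuntzWord_mul_cuntzWord (hu : IsCuntzFamily u) {μ ν : List ι}
    (h : μ <+: ν ∨ ν <+: μ → μ = ν) :
    star (cuntzWord u μ) * cuntzWord u ν = if μ = ν then 1 else 0 := by
  induction μ generalizing ν with
  | nil =>
    obtain rfl := h (Or.inl List.nil_prefix)
    simp [cuntzWord]
  | cons i μ ih =>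
    cases ν with
    | nil => exact absurd (h (Or.inr List.nil_prefix)) (List.cons_ne_nil _ _)
    | cons j ν =>
      have hmid : star (cuntzWord u (i :: μ)) * cuntzWord u (j :: ν) =
          star (cuntzWord u μ) * (star (u i) * u j) * cuntzWord u ν := by
        simp only [cuntzWord, List.map_cons, List.prod_cons, star_mul, mul_assoc]
      rw [hmid, hu.star_mul_eq]
      by_cases hij : i = j
      · subst hij
        simp only [if_true, mul_one, List.cons.injEq, true_and]
        exact ih fun h' => (List.cons.inj (h (by simpa only [List.cons_prefix_cons, true_and]))).2
      · simp [hij]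

theorem cuntzWord_comp (hu : IsCuntzFamily u) {c : κ → List ι}
    (hc : ∀ k l, c k <+: c l → k = l)
    (hsum : ∑ k, cuntzWord u (c k) * star (cuntzWord u (c k)) = 1) :
    IsCuntzFamily fun k => cuntzWord u (c k) where
  star_mul_eq k l := by
    rw [hu.star_cuntzWord_mul_cuntzWord fun h => h.elim (fun h => congrArg c (hc k l h))
      (fun h => congrArg c (hc l k h).symm)]
    exact if_congr ⟨fun h => hc k l (h ▸ List.prefix_refl _), congrArg c⟩ rfl rfl
  sum_mul_star := hsum

theorem sum_cuntzWord_append_mul_star (hu : IsCuntzFamily u) (μ : List ι) :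
    ∑ i, cuntzWord u (μ ++ [i]) * star (cuntzWord u (μ ++ [i])) =
      cuntzWord u μ * star (cuntzWord u μ) := by
  simp only [cuntzWord, List.map_append, List.map_cons, List.map_nil, List.prod_append,
    List.prod_cons, List.prod_nil, mul_one, star_mul]
  simp_rw [mul_assoc, ← Finset.mul_sum, ← mul_assoc, ← Finset.sum_mul, hu.sum_mul_star,
    one_mul]

end IsCuntzFamily

-- With `0, 1` standing for `a, b` and `s_μ = cuntzWord ![S_a, S_b] μ`, the operator `t_a` is
-- `∑ k, s_{taTarget k} s_{taSource k}*`, and likewise for `t_b`.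
def taTarget : Fin 6 → List (Fin 2) :=
  ![[0, 0, 0], [1, 0], [0, 1], [1, 1], [0, 0, 1, 0], [0, 0, 1, 1]]

def taSource : Fin 6 → List (Fin 2) :=
  ![[0, 0], [1, 0, 0], [1, 0, 1, 0], [1, 0, 1, 1], [1, 1], [0, 1]]

def tbTarget : Fin 6 → List (Fin 2) :=
  ![[1, 1, 0], [0, 1], [0, 0], [1, 0], [1, 1, 1, 0], [1, 1, 1, 1]]

def tbSource : Fin 6 → List (Fin 2) :=
  ![[1, 1], [0, 1, 0], [0, 1, 1, 0], [0, 1, 1, 1], [1, 0], [0, 0]]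

namespace IsCuntzFamily

variable {R : Type*} [Semiring R] [StarRing R] {A B : R}

theorem cuntzWord_append_zero_mul_star_add (h : IsCuntzFamily ![A, B]) (μ : List (Fin 2)) :
    cuntzWord ![A, B] (μ ++ [0]) * star (cuntzWord ![A, B] (μ ++ [0])) +
      cuntzWord ![A, B] (μ ++ [1]) * star (cuntzWord ![A, B] (μ ++ [1])) =
      cuntzWord ![A, B] μ * star (cuntzWord ![A, B] μ) := by
  rw [← h.sum_cuntzWord_append_mul_star μ, Fin.sum_univ_two]

theorem cuntzWord_taTarget (h : IsCuntzFamily ![A, B]) :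
    IsCuntzFamily fun k => cuntzWord ![A, B] (taTarget k) := by
  refine h.cuntzWord_comp (by decide) ?_
  set p : List (Fin 2) → R := fun μ => cuntzWord ![A, B] μ * star (cuntzWord ![A, B] μ)
  have hp : ∀ μ, p (μ ++ [0]) + p (μ ++ [1]) = p μ := h.cuntzWord_append_zero_mul_star_add
  calc
    _ = p [0, 0, 0] + (p [0, 0, 1, 0] + p [0, 0, 1, 1]) + p [0, 1] + (p [1, 0] + p [1, 1]) := by
      rw [Fin.sum_univ_six]; simp only [taTarget, Matrix.cons_val]; abel
    _ = p [] := by erw [hp [0, 0, 1], hp [0, 0], hp [0], hp [1], hp []]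
    _ = 1 := by simp [p, cuntzWord]

theorem cuntzWord_taSource (h : IsCuntzFamily ![A, B]) :
    IsCuntzFamily fun k => cuntzWord ![A, B] (taSource k) := by
  refine h.cuntzWord_comp (by decide) ?_
  set p : List (Fin 2) → R := fun μ => cuntzWord ![A, B] μ * star (cuntzWord ![A, B] μ)
  have hp : ∀ μ, p (μ ++ [0]) + p (μ ++ [1]) = p μ := h.cuntzWord_append_zero_mul_star_add
  calc
    _ = p [0, 0] + p [0, 1] + (p [1, 0, 0] + (p [1, 0, 1, 0] + p [1, 0, 1, 1]) + p [1, 1]) := by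
      rw [Fin.sum_univ_six]; simp only [taSource, Matrix.cons_val]; abel
    _ = p [] := by erw [hp [1, 0, 1], hp [1, 0], hp [1], hp [0], hp []]
    _ = 1 := by simp [p, cuntzWord]

theorem cuntzWord_tbTarget (h : IsCuntzFamily ![A, B]) :
    IsCuntzFamily fun k => cuntzWord ![A, B] (tbTarget k) := by
  refine h.cuntzWord_comp (by decide) ?_
  set p : List (Fin 2) → R := fun μ => cuntzWord ![A, B] μ * star (cuntzWord ![A, B] μ)
  have hp : ∀ μ, p (μ ++ [0]) + p (μ ++ [1]) = p μ := h.cuntzWord_append_zero_mul_star_add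
  calc
    _ = p [0, 0] + p [0, 1] + (p [1, 0] + (p [1, 1, 0] + (p [1, 1, 1, 0] + p [1, 1, 1, 1]))) := by
      rw [Fin.sum_univ_six]; simp only [tbTarget, Matrix.cons_val]; abel
    _ = p [] := by erw [hp [1, 1, 1], hp [1, 1], hp [1], hp [0], hp []]
    _ = 1 := by simp [p, cuntzWord]

theorem cuntzWord_tbSource (h : IsCuntzFamily ![A, B]) :
    IsCuntzFamily fun k => cuntzWord ![A, B] (tbSource k) := by
  refine h.cuntzWord_comp (by decide) ?_
  set p : List (Fin 2) → R := fun μ => cuntzWord ![A, B] μ * star (cuntzWord ![A, B] μ)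
  have hp : ∀ μ, p (μ ++ [0]) + p (μ ++ [1]) = p μ := h.cuntzWord_append_zero_mul_star_add
  calc
    _ = p [0, 0] + (p [0, 1, 0] + (p [0, 1, 1, 0] + p [0, 1, 1, 1])) + (p [1, 0] + p [1, 1]) := by
      rw [Fin.sum_univ_six]; simp only [tbSource, Matrix.cons_val]; abel
    _ = p [] := by erw [hp [0, 1, 1], hp [0, 1], hp [0], hp [1], hp []]
    _ = 1 := by simp [p, cuntzWord]

theorem ta_mem_unitary (h : IsCuntzFamily ![A, B]) :
    (A ^ 3 * (star A) ^ 2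
      + B * A * (star A) ^ 2 * star B
      + A * B * star A * star B * star A * star B
      + B ^ 2 * (star B) ^ 2 * star A * star B
      + A ^ 2 * B * A * (star B) ^ 2
      + A ^ 2 * B ^ 2 * star B * star A) ∈ unitary R := by
  convert (cuntzWord_taTarget h).sum_mul_star_mem_unitary (cuntzWord_taSource h) using 1
  simp [Fin.sum_univ_six, cuntzWord, taTarget, taSource, star_mul, pow_succ, mul_assoc]

theorem tb_mem_unitary (h : IsCuntzFamily ![A, B]) :
    (B ^ 2 * A * (star B) ^ 2
      + A * B * star A * star B * star A
      + A ^ 2 * star A * (star B) ^ 2 * star A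
      + B * A * (star B) ^ 3 * star A
      + B ^ 3 * A * star A * star B
      + B ^ 4 * (star A) ^ 2) ∈ unitary R := by
  convert (cuntzWord_tbTarget h).sum_mul_star_mem_unitary (cuntzWord_tbSource h) using 1
  simp [Fin.sum_univ_six, cuntzWord, tbTarget, tbSource, star_mul, pow_succ, mul_assoc]

end IsCuntzFamily

namespace lp

variable {X : Type*} [DecidableEq X]

theorem ext_single_one_s18 {T U : lp (fun _ : X => ℂ) 2 →L[ℂ] lp (fun _ : X => ℂ) 2}
    (h : ∀ x, T (lp.single 2 x (1 : ℂ)) = U (lp.single 2 x 1)) : T = U :=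
  lp.ext_continuousLinearMap (by norm_num) fun x => ContinuousLinearMap.ext fun c => by
    have hc : lp.single (E := fun _ : X => ℂ) 2 x c = c • lp.single 2 x 1 := by
      rw [← lp.single_smul, smul_eq_mul, mul_one]
    simp [hc, h x]

variable {S : lp (fun _ : X => ℂ) 2 →L[ℂ] lp (fun _ : X => ℂ) 2} {g : X → X}

theorem star_apply_single_apply (hS : ∀ x, S (lp.single 2 x 1) = lp.single 2 (g x) 1) (x y : X) :
    star S (lp.single 2 y 1) x = if g x = y then 1 else 0 := by
  have hx (f : lp (fun _ : X => ℂ) 2) : f x = inner ℂ (lp.single 2 x (1 : ℂ)) f := by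
    simp [lp.inner_single_left]
  rw [hx, ContinuousLinearMap.star_eq_adjoint, ContinuousLinearMap.adjoint_inner_right, hS,
    lp.inner_single_left]
  simp [Pi.single_apply]

theorem star_apply_single_self (hS : ∀ x, S (lp.single 2 x 1) = lp.single 2 (g x) 1)
    (hg : Function.Injective g) (x : X) :
    star S (lp.single 2 (g x) 1) = lp.single 2 x 1 := by
  ext w
  simp only [star_apply_single_apply hS, hg.eq_iff, lp.single_apply, Pi.single_apply]

theorem star_apply_single_of_notMem_range (hS : ∀ x, S (lp.single 2 x 1) = lp.single 2 (g x) 1)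
    {y : X} (hy : y ∉ Set.range g) : star S (lp.single 2 y 1) = 0 := by
  ext w
  rw [star_apply_single_apply hS, if_neg fun h => hy ⟨w, h⟩]
  rfl

theorem isCuntzFamily_of_bijective {ι : Type*} [Fintype ι] [DecidableEq ι]
    {S : ι → lp (fun _ : X => ℂ) 2 →L[ℂ] lp (fun _ : X => ℂ) 2} {g : ι → X → X}
    (hS : ∀ i x, S i (lp.single 2 x 1) = lp.single 2 (g i x) 1)
    (hg : Function.Bijective fun p : ι × X => g p.1 p.2) : IsCuntzFamily S := by
  have hstar : ∀ i j x,
      star (S i) (lp.single 2 (g j x) 1) = if i = j then lp.single 2 x 1 else 0 := by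
    intro i j x
    split_ifs with hij
    · subst hij
      exact star_apply_single_self (hS i)
        (fun x x' h => congrArg Prod.snd (hg.1 (a₁ := (i, x)) (a₂ := (i, x')) h)) x
    · refine star_apply_single_of_notMem_range (hS i) ?_
      rintro ⟨x', hx'⟩
      exact hij (congrArg Prod.fst (hg.1 (a₁ := (i, x')) (a₂ := (j, x)) hx'))
  refine ⟨fun i j => ext_single_one_s18 fun x => ?_, ext_single_one_s18 fun y => ?_⟩
  · rw [mul_apply_eq_comp, hS, hstar]
    split_ifs <;> simp
  · obtain ⟨⟨j, x⟩, rfl⟩ := hg.2 y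
    rw [_root_.sum_apply, Finset.sum_eq_single j]
    · rw [mul_apply_eq_comp, hstar, if_pos rfl, hS, one_apply_eq_self]
    · intro i _ hij
      rw [mul_apply_eq_comp, hstar, if_neg hij, map_zero]
    · simp

end lp

namespace FreeGroup

variable {α : Type*}

theorem toWord_freeMonoidLift_of [DecidableEq α] (w : FreeMonoid α) :
    toWord (FreeMonoid.lift of w) = w.toList.map (·, true) := by
  have hmk : FreeMonoid.lift of w = mk (w.toList.map (·, true)) := by
    induction w using FreeMonoid.inductionOn' with
    | one => rfl
    | of_mul a w ih => rw [_root_.map_mul, FreeMonoid.lift_eval_of, ih]; rfl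
  rw [hmk, toWord_mk, IsReduced.reduce_eq]
  simpa [IsReduced, List.isChain_map] using List.isChain_iff_getElem.mpr fun _ _ => trivial

theorem injective_freeMonoidLift_of :
    Function.Injective (FreeMonoid.lift (of : α → FreeGroup α)) := fun v w h => by
  classical
  have := congrArg toWord h
  rw [toWord_freeMonoidLift_of, toWord_freeMonoidLift_of] at this
  exact FreeMonoid.toList.injective
    (List.map_injective_iff.mpr (fun a b h => congrArg Prod.fst h) this)

end FreeGroup

namespace FreeMonoid

variable {α : Type*}

theorem eq_one_or_exists_eq_mul_of (w : FreeMonoid α) : w = 1 ∨ ∃ v a, w = v * of a := by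
  rcases List.eq_nil_or_concat w.toList with h | ⟨L, a, h⟩
  · exact Or.inl (toList.injective h)
  · exact Or.inr ⟨ofList L, a, toList.injective (h.trans (List.concat_eq_append ..))⟩

end FreeMonoid

namespace Yset

open FreeGroup

theorem mul_of_mem {y : F2} (hy : y ∈ Yset) (i : Fin 2) : y * of i ∈ Yset := by
  obtain ⟨n, w, rfl⟩ := hy
  exact ⟨n, w * FreeMonoid.of i, by rw [_root_.map_mul, FreeMonoid.lift_eval_of, mul_assoc]⟩

theorem exists_pow_mul_mem_mrange {y : F2} (hy : y ∈ Yset) :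
    ∃ N : ℕ, of 0 ^ N * y ∈ MonoidHom.mrange (FreeMonoid.lift (of : Fin 2 → F2)) := by
  obtain ⟨n, w, rfl⟩ := hy
  refine ⟨n.natAbs, FreeMonoid.of 0 ^ (n.natAbs + n).toNat * w, ?_⟩
  rw [_root_.map_mul, map_pow, FreeMonoid.lift_eval_of, ← zpow_natCast,
    Int.toNat_of_nonneg (by omega), zpow_add, ← zpow_natCast, mul_assoc]

theorem mul_of_zero_ne_mul_of_one {y z : F2} (hy : y ∈ Yset) (hz : z ∈ Yset) :
    y * of 0 ≠ z * of 1 := by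
  intro h
  obtain ⟨M, hM⟩ := exists_pow_mul_mem_mrange hy
  obtain ⟨N, hN⟩ := exists_pow_mul_mem_mrange hz
  set P := MonoidHom.mrange (FreeMonoid.lift (of : Fin 2 → F2))
  have hof : of 0 ∈ P := ⟨FreeMonoid.of 0, rfl⟩
  obtain ⟨v, hv⟩ : of 0 ^ (N + M) * y ∈ P := by
    rw [pow_add, mul_assoc]; exact P.mul_mem (P.pow_mem hof N) hM
  obtain ⟨w, hw⟩ : of 0 ^ (N + M) * z ∈ P := by
    rw [add_comm, pow_add, mul_assoc]; exact P.mul_mem (P.pow_mem hof M) hN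
  have hvw : v * FreeMonoid.of 0 = w * FreeMonoid.of 1 := injective_freeMonoidLift_of <| by
    simp only [_root_.map_mul, FreeMonoid.lift_eval_of, hv, hw, mul_assoc, h]
  simpa using congrArg (fun u => u.toList.getLast?) hvw

theorem exists_mul_of_eq {y : F2} (hy : y ∈ Yset) : ∃ i, ∃ z ∈ Yset, z * of i = y := by
  obtain ⟨n, w, rfl⟩ := hy
  rcases w.eq_one_or_exists_eq_mul_of with rfl | ⟨v, i, rfl⟩
  · exact ⟨0, of 0 ^ (n - 1), ⟨n - 1, 1, by simp⟩, by simp [← zpow_add_one]⟩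
  · exact ⟨i, of 0 ^ n * FreeMonoid.lift of v, ⟨n, v, rfl⟩, by simp [mul_assoc]⟩

def mulOf (i : Fin 2) (y : Yset) : Yset := ⟨y * of i, mul_of_mem y.2 i⟩

theorem bijective_mulOf : Function.Bijective fun p : Fin 2 × Yset => mulOf p.1 p.2 := by
  constructor
  · rintro ⟨i, y⟩ ⟨j, z⟩ h
    have h' : (y : F2) * of i = z * of j := congrArg Subtype.val h
    have hij : i = j := by
      by_contra hij
      fin_cases i <;> fin_cases j
      · exact hij rfl
      · exact mul_of_zero_ne_mul_of_one y.2 z.2 h'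
      · exact mul_of_zero_ne_mul_of_one z.2 y.2 h'.symm
      · exact hij rfl
    subst hij
    exact Prod.ext rfl (Subtype.ext (mul_right_cancel h'))
  · rintro ⟨y, hy⟩
    obtain ⟨i, z, hz, rfl⟩ := exists_mul_of_eq hy
    exact ⟨(i, ⟨z, hz⟩), rfl⟩

end Yset

/-- The operators
`t_a = S_a³(S_a*)² + S_bS_a(S_a*)²S_b* + S_aS_bS_a*S_b*S_a*S_b* + S_b²(S_b*)²S_a*S_b*`
` + S_a²S_bS_a(S_b*)² + S_a²S_b²S_b*S_a*` and
`t_b = S_b²S_a(S_b*)² + S_aS_bS_a*S_b*S_a* + S_a²S_a*(S_b*)²S_a* + S_bS_a(S_b*)³S_a*`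
` + S_b³S_aS_a*S_b* + S_b⁴(S_a*)²` on `ℓ²(Y)` are both unitary. -/
theorem stmt18 (Sa Sb : l2Y →L[ℂ] l2Y)
    (hSa : ∀ (y : Yset) (h : (y : F2) * FreeGroup.of 0 ∈ Yset),
      Sa (δ y) = δ ⟨(y : F2) * FreeGroup.of 0, h⟩)
    (hSb : ∀ (y : Yset) (h : (y : F2) * FreeGroup.of 1 ∈ Yset),
      Sb (δ y) = δ ⟨(y : F2) * FreeGroup.of 1, h⟩) :
    (Sa ^ 3 * (star Sa) ^ 2
      + Sb * Sa * (star Sa) ^ 2 * star Sb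
      + Sa * Sb * star Sa * star Sb * star Sa * star Sb
      + Sb ^ 2 * (star Sb) ^ 2 * star Sa * star Sb
      + Sa ^ 2 * Sb * Sa * (star Sb) ^ 2
      + Sa ^ 2 * Sb ^ 2 * star Sb * star Sa) ∈ unitary (l2Y →L[ℂ] l2Y) ∧
    (Sb ^ 2 * Sa * (star Sb) ^ 2
      + Sa * Sb * star Sa * star Sb * star Sa
      + Sa ^ 2 * star Sa * (star Sb) ^ 2 * star Sa
      + Sb * Sa * (star Sb) ^ 3 * star Sa
      + Sb ^ 3 * Sa * star Sa * star Sb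
      + Sb ^ 4 * (star Sa) ^ 2) ∈ unitary (l2Y →L[ℂ] l2Y) := by
  have hS : ∀ i y, ![Sa, Sb] i (lp.single 2 y 1) = lp.single 2 (Yset.mulOf i y) 1 := by
    intro i y
    fin_cases i
    exacts [hSa y _, hSb y _]
  have hcuntz := lp.isCuntzFamily_of_bijective hS Yset.bijective_mulOf
  exact ⟨hcuntz.ta_mem_unitary, hcuntz.tb_mem_unitary⟩
end
end
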